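/- For any lists p and y* over a type α with decidable equality and any token a : α, if there is no k < |y*| with D(p, y*_{<k}) = m(p, y*) and y*[k] = a (i.e., a is not an optimal extension of p), then the minimum of D(p ++ (a :: s), y*) over all lists s equals exactly m(p, y*) + 1, where m(p, y*) = min over 0 ≤ j ≤ |y*| of D(p, y*_{<j}). -/

import Mathlib

/-- Costs for the edit distance (as in the older Mathlib's `Levenshtein.Cost`). -/
structure Levenshtein.Cost (α β δ : Type*) where
  /-- Cost to delete an element from a list. -/
  delete : α → δ
  /-- Cost in insert an element into a list. -/
  insert : β → δ
  /-- Cost to substitute one element for another in a list. -/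
  substitute : α → β → δ

/-- The default cost structure, with unit cost for each operation (older Mathlib). -/
def Levenshtein.defaultCost {α : Type*} [DecidableEq α] : Levenshtein.Cost α α ℕ where
  delete _ := 1
  insert _ := 1
  substitute a b := if a = b then 0 else 1

/-- Auxiliary step of `suffixLevenshtein` (older Mathlib's `Levenshtein.impl`). -/
def Levenshtein.impl {α β δ : Type*} [AddZeroClass δ] [Min δ]
    (C : Levenshtein.Cost α β δ)
    (xs : List α) (y : β) (d : {r : List δ // 0 < r.length}) : {r : List δ // 0 < r.length} :=
  let ⟨ds, w⟩ := d
  xs.zip (ds.zip ds.tail) |>.foldr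
    (init := ⟨[C.insert y + ds.getLast (List.ne_nil_of_length_pos w)], by simp⟩)
    (fun ⟨x, d₀, d₁⟩ ⟨r, w⟩ =>
      ⟨min (C.delete x + r[0]) (min (C.insert y + d₀) (C.substitute x y + d₁)) :: r, by simp⟩)

/-- Edit distances between `xs` and all suffixes of `ys` (older Mathlib). -/
def suffixLevenshtein {α β δ : Type*} [AddZeroClass δ] [Min δ]
    (C : Levenshtein.Cost α β δ) (xs : List α) (ys : List β) :
    {r : List δ // 0 < r.length} :=
  ys.foldr
    (Levenshtein.impl C xs)
    (xs.foldr (init := ⟨[0], by simp⟩) (fun a ⟨r, w⟩ => ⟨(C.delete a + r[0]) :: r, by simp⟩))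

/-- The edit distance of older Mathlib's `levenshtein`. -/
def levenshtein {α β δ : Type*} [AddZeroClass δ] [Min δ]
    (C : Levenshtein.Cost α β δ) (xs : List α) (ys : List β) : δ :=
  let ⟨r, w⟩ := suffixLevenshtein C xs ys
  r[0]

/-- Unit-cost Levenshtein edit distance between two lists. -/
def editDist {α : Type*} [DecidableEq α] (u v : List α) : ℕ :=
  levenshtein Levenshtein.defaultCost u v

/-- `rowMin p y = min over 0 ≤ j ≤ |y|` of the edit distance between `p` and `y.take j`. -/
def rowMin {α : Type*} [DecidableEq α] (p y : List α) : ℕ :=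
  (Finset.range (y.length + 1)).inf' (by simp) (fun j => editDist p (y.take j))

/-!
Split an optimal alignment of `p ++ a :: s` with `y*` at the point where `p` ends: it costs at
least `D(p, y*_{<j}) + D(a :: s, y*[j:])` for some `j`. The first term is at least `m(p, y*)`,
and the second vanishes only if `y*[j:] = a :: s`, i.e. `y*[j] = a`; as `a` is not an optimal
extension, one of the two terms exceeds its lower bound, so the cost is at least `m(p, y*) + 1`.
Conversely, if `j` attains `m(p, y*)`, take `s = y*[j+1:]`: aligning `a` with `y*[j]` (or
deleting `a` when `j = |y*|`) costs at most one more.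
-/

namespace Levenshtein

variable {α β δ : Type*} [AddZeroClass δ] [Min δ] (C : Levenshtein.Cost α β δ)

theorem impl_cons_val (x : α) (xs : List α) (y : β) (d : δ) (ds : List δ)
    (w : 0 < (d :: ds).length) (w' : 0 < ds.length) :
    (impl C (x :: xs) y ⟨d :: ds, w⟩).1 =
      min (C.delete x + (impl C xs y ⟨ds, w'⟩).1[0]'(impl C xs y ⟨ds, w'⟩).2)
        (min (C.insert y + d) (C.substitute x y + ds[0])) :: (impl C xs y ⟨ds, w'⟩).1 :=
  match ds, w' with | _ :: _, _ => rfl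

theorem impl_length (xs : List α) (y : β) (d : {r : List δ // 0 < r.length})
    (w : d.1.length = xs.length + 1) :
    (impl C xs y d).1.length = xs.length + 1 := by
  induction xs generalizing d with
  | nil => rfl
  | cons x xs ih =>
    match d, w with
    | ⟨_ :: _ :: _, _⟩, w =>
      rw [impl_cons_val C _ _ _ _ _ _ (by simp), List.length_cons, ih _ (by simpa using w)]
      rfl

end Levenshtein

open Levenshtein

section levenshtein

variable {α β δ : Type*} [AddZeroClass δ] [Min δ] (C : Levenshtein.Cost α β δ)

theorem suffixLevenshtein_length (xs : List α) (ys : List β) :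
    (suffixLevenshtein C xs ys).1.length = xs.length + 1 := by
  induction ys with
  | nil =>
    induction xs with
    | nil => rfl
    | cons _ xs ih => exact congrArg (· + 1) ih
  | cons y ys ih => exact impl_length C xs y _ ih

theorem suffixLevenshtein_nil_left (ys : List β) :
    suffixLevenshtein C ([] : List α) ys = ⟨[levenshtein C [] ys], by simp⟩ := by
  obtain ⟨d, hd⟩ := List.length_eq_one_iff.mp (suffixLevenshtein_length C ([] : List α) ys)
  exact Subtype.ext (hd.trans (congrArg (fun r => [r]) (by simp [levenshtein, hd])))

theorem suffixLevenshtein_cons_left (x : α) (xs : List α) (ys : List β) :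
    suffixLevenshtein C (x :: xs) ys =
      ⟨levenshtein C (x :: xs) ys :: (suffixLevenshtein C xs ys).1, by simp⟩ := by
  induction ys with
  | nil => rfl
  | cons y ys ih =>
    have h := impl_cons_val C x xs y (levenshtein C (x :: xs) ys) _ (by simp)
      (suffixLevenshtein C xs ys).2
    rw [← ih] at h
    apply Subtype.ext
    show (impl C (x :: xs) y (suffixLevenshtein C (x :: xs) ys)).1 = _
    rw [h]
    congr 1
    show _ = (impl C (x :: xs) y (suffixLevenshtein C (x :: xs) ys)).1[0]'(impl C _ y _).2
    simp only [h, List.getElem_cons_zero]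

theorem levenshtein_cons_cons (x : α) (xs : List α) (y : β) (ys : List β) :
    levenshtein C (x :: xs) (y :: ys) =
      min (C.delete x + levenshtein C xs (y :: ys))
        (min (C.insert y + levenshtein C (x :: xs) ys)
          (C.substitute x y + levenshtein C xs ys)) := by
  show (impl C (x :: xs) y (suffixLevenshtein C (x :: xs) ys)).1[0]'(impl C _ y _).2 = _
  simp only [suffixLevenshtein_cons_left,
    impl_cons_val C x xs y _ _ _ (suffixLevenshtein C xs ys).2, List.getElem_cons_zero]
  rfl

@[simp] theorem levenshtein_cons_nil (x : α) (xs : List α) :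
    levenshtein C (x :: xs) ([] : List β) = C.delete x + levenshtein C xs [] := rfl

@[simp] theorem levenshtein_nil_cons (y : β) (ys : List β) :
    levenshtein C ([] : List α) (y :: ys) = C.insert y + levenshtein C [] ys := by
  show (impl C [] y (suffixLevenshtein C [] ys)).1[0]'(impl C [] y _).2 = _
  rw [suffixLevenshtein_nil_left]
  rfl

end levenshtein

section editDist

variable {α : Type*} [DecidableEq α]

theorem editDist_cons_cons (x : α) (u : List α) (y : α) (v : List α) :
    editDist (x :: u) (y :: v) =
      min (1 + editDist u (y :: v))
        (min (1 + editDist (x :: u) v) ((if x = y then 0 else 1) + editDist u v)) :=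
  levenshtein_cons_cons _ x u y v

@[simp] theorem editDist_nil_right (u : List α) : editDist u [] = u.length := by
  induction u with
  | nil => rfl
  | cons x u ih => simp only [editDist, levenshtein_cons_nil] at ih ⊢; rw [ih]; exact add_comm _ _

@[simp] theorem editDist_nil_left (v : List α) : editDist [] v = v.length := by
  induction v with
  | nil => rfl
  | cons y v ih => simp only [editDist, levenshtein_nil_cons] at ih ⊢; rw [ih]; exact add_comm _ _

@[simp] theorem editDist_self (u : List α) : editDist u u = 0 := by
  induction u with
  | nil => rfl
  | cons x u ih => simp [editDist_cons_cons, ih]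

theorem editDist_cons_left_le (x : α) (u v : List α) :
    editDist (x :: u) v ≤ 1 + editDist u v := by
  cases v with
  | nil => simp [add_comm]
  | cons y v => rw [editDist_cons_cons]; exact min_le_left _ _

theorem editDist_cons_right_le (u : List α) (y : α) (v : List α) :
    editDist u (y :: v) ≤ 1 + editDist u v := by
  cases u with
  | nil => simp [add_comm]
  | cons x u => rw [editDist_cons_cons]; exact (min_le_right _ _).trans (min_le_left _ _)

theorem editDist_cons_cons_le (x : α) (u : List α) (y : α) (v : List α) :
    editDist (x :: u) (y :: v) ≤ (if x = y then 0 else 1) + editDist u v := by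
  rw [editDist_cons_cons]; exact (min_le_right _ _).trans (min_le_right _ _)

theorem eq_of_editDist_eq_zero {u v : List α} (h : editDist u v = 0) : u = v := by
  induction u generalizing v with
  | nil => simpa [eq_comm] using h
  | cons x u ih =>
    cases v with
    | nil => simp at h
    | cons y v =>
      rw [editDist_cons_cons] at h
      split_ifs at h with hxy
      · rw [hxy, ih (v := v) (by omega)]
      · omega

theorem editDist_cons_tail_le_one (a : α) (l : List α) : editDist (a :: l.tail) l ≤ 1 := by
  cases l with
  | nil => simp
  | cons b t => simpa using (editDist_cons_cons_le a t b t).trans (by split_ifs <;> simp)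

theorem editDist_append_le (u w v₁ v₂ : List α) :
    editDist (u ++ w) (v₁ ++ v₂) ≤ editDist u v₁ + editDist w v₂ := by
  induction u generalizing v₁ with
  | nil =>
    induction v₁ with
    | nil => simp
    | cons y v₁ ih =>
      have := editDist_cons_right_le w y (v₁ ++ v₂)
      simp only [List.nil_append, List.cons_append, editDist_nil_left, List.length_cons]
        at ih this ⊢
      omega
  | cons x u ihu =>
    induction v₁ with
    | nil =>
      have := editDist_cons_left_le x (u ++ w) v₂
      have := ihu []
      simp only [List.nil_append, editDist_nil_right, List.length_cons, List.cons_append]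
        at this ⊢
      omega
    | cons y v₁ ihv =>
      have hdel := ihu (y :: v₁)
      have hsub := ihu v₁
      simp only [List.cons_append] at hdel ihv ⊢
      rw [editDist_cons_cons, editDist_cons_cons]
      omega

theorem exists_editDist_take_add_editDist_drop_le (u w v : List α) :
    ∃ j ≤ v.length, editDist u (v.take j) + editDist w (v.drop j) ≤ editDist (u ++ w) v := by
  induction u generalizing v with
  | nil => exact ⟨0, Nat.zero_le _, by simp⟩
  | cons x u ihu =>
    induction v with
    | nil => exact ⟨0, le_rfl, by simp; omega⟩
    | cons y v ihv =>
      have del : ∃ j ≤ (y :: v).length, editDist (x :: u) ((y :: v).take j) +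
          editDist w ((y :: v).drop j) ≤ 1 + editDist (u ++ w) (y :: v) := by
        obtain ⟨j, hj, h⟩ := ihu (y :: v)
        have := editDist_cons_left_le x u ((y :: v).take j)
        exact ⟨j, hj, by omega⟩
      have ins : ∃ j ≤ (y :: v).length, editDist (x :: u) ((y :: v).take j) +
          editDist w ((y :: v).drop j) ≤ 1 + editDist (x :: (u ++ w)) v := by
        obtain ⟨j, hj, h⟩ := ihv
        have := editDist_cons_right_le (x :: u) y (v.take j)
        refine ⟨j + 1, by simpa using hj, ?_⟩
        simp only [List.take_succ_cons, List.drop_succ_cons, List.cons_append] at h ⊢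
        omega
      have sub : ∃ j ≤ (y :: v).length, editDist (x :: u) ((y :: v).take j) +
          editDist w ((y :: v).drop j) ≤ (if x = y then 0 else 1) + editDist (u ++ w) v := by
        obtain ⟨j, hj, h⟩ := ihu v
        have := editDist_cons_cons_le x u y (v.take j)
        refine ⟨j + 1, by simpa using hj, ?_⟩
        simp only [List.take_succ_cons, List.drop_succ_cons]
        omega
      obtain h | h | h : editDist (x :: (u ++ w)) (y :: v) = 1 + editDist (u ++ w) (y :: v) ∨
          editDist (x :: (u ++ w)) (y :: v) = 1 + editDist (x :: (u ++ w)) v ∨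
          editDist (x :: (u ++ w)) (y :: v) = (if x = y then 0 else 1) + editDist (u ++ w) v := by
        rw [editDist_cons_cons]; omega
      all_goals rw [List.cons_append, h]; assumption

end editDist

section rowMin

variable {α : Type*} [DecidableEq α]

theorem rowMin_le_editDist_take (p y : List α) {j : ℕ} (hj : j ≤ y.length) :
    rowMin p y ≤ editDist p (y.take j) :=
  Finset.inf'_le _ (Finset.mem_range.mpr (Nat.lt_succ_of_le hj))

theorem exists_editDist_take_eq_rowMin (p y : List α) :
    ∃ j ≤ y.length, editDist p (y.take j) = rowMin p y := by
  obtain ⟨j, hj, h⟩ := Finset.exists_mem_eq_inf' (Finset.nonempty_range_add_one (n := y.length))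
    (fun j => editDist p (y.take j))
  exact ⟨j, Nat.le_of_lt_succ (Finset.mem_range.mp hj), h.symm⟩

theorem exists_editDist_append_cons_le_rowMin_add_one (p y : List α) (a : α) :
    ∃ s, editDist (p ++ a :: s) y ≤ rowMin p y + 1 := by
  obtain ⟨j, -, hj⟩ := exists_editDist_take_eq_rowMin p y
  refine ⟨y.drop (j + 1), ?_⟩
  calc editDist (p ++ a :: y.drop (j + 1)) y
      = editDist (p ++ a :: (y.drop j).tail) (y.take j ++ y.drop j) := by
        rw [List.tail_drop, List.take_append_drop]
    _ ≤ editDist p (y.take j) + editDist (a :: (y.drop j).tail) (y.drop j) :=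
        editDist_append_le _ _ _ _
    _ ≤ rowMin p y + 1 := by rw [hj]; exact Nat.add_le_add_left (editDist_cons_tail_le_one _ _) _

theorem rowMin_add_one_le_editDist_append_cons {p y : List α} {a : α}
    (h : ¬ ∃ k, ∃ (hk : k < y.length), editDist p (y.take k) = rowMin p y ∧ y[k] = a)
    (s : List α) : rowMin p y + 1 ≤ editDist (p ++ a :: s) y := by
  obtain ⟨j, hj, hsplit⟩ := exists_editDist_take_add_editDist_drop_le p (a :: s) y
  have hmin := rowMin_le_editDist_take p y hj
  by_cases hzero : editDist (a :: s) (y.drop j) = 0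
  · have hdrop := eq_of_editDist_eq_zero hzero
    have hlt : j < y.length := by
      have := congrArg List.length hdrop
      simp only [List.length_cons, List.length_drop] at this
      omega
    rw [List.drop_eq_getElem_cons hlt] at hdrop
    have hne : editDist p (y.take j) ≠ rowMin p y :=
      fun heq => h ⟨j, hlt, heq, (List.cons.inj hdrop).1.symm⟩
    omega
  · omega

end rowMin

theorem non_optimal_extension_eq_rowMin_add_one {α : Type*} [DecidableEq α]
    (p ystar : List α) (a : α)
    (h : ¬ ∃ k, ∃ (hk : k < ystar.length),
        editDist p (ystar.take k) = rowMin p ystar ∧ ystar[k] = a) :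
    sInf {d | ∃ s : List α, d = editDist (p ++ a :: s) ystar}
      = rowMin p ystar + 1 := by
  have hlower := rowMin_add_one_le_editDist_append_cons h
  obtain ⟨s, hs⟩ := exists_editDist_append_cons_le_rowMin_add_one p ystar a
  refine IsLeast.csInf_eq ⟨⟨s, le_antisymm (hlower s) hs⟩, ?_⟩
  rintro _ ⟨t, rfl⟩
  exact hlower t
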